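/- Let a, b > 0 and k ∈ {1, 2}. Let ν be the law of Z = X·Y, where X and Y are independent, X Gamma-distributed with shape a and rate a and Y Gamma-distributed with shape b and rate b. For each S > 0 let μ(S) > 0 be the unique water level of ν at S, and let C̄(S) = (1/k)·∫ max(log(λ/μ(S)), 0) dν(λ) be the waterfilling capacity. Then lim_{S→∞} [ C̄(S) − (1/k) log S ] = (1/k)·[ ψ(a) + ψ(b) − log(a·b) ]. -/

import Mathlib

/-!
With `μ` the water level at `S`, the quantity in question equals
`∫ max (log λ) (log μ) dν - log (μ S)`. The water-level equation gives `μ ≤ 1 / S` and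
`μ S = ∫ max (1 - μ / λ) 0 dν`, which tends to `1` by dominated convergence; a second dominated
convergence, with majorant `|log λ|`, sends `∫ max (log λ) (log μ) dν` to `E[log Z]`.
Finally `E[log Z] = E[log X] + E[log Y]`, and `E[log X] = ψ(a) - log r` for `X ~ Gamma(a, r)`:
differentiate `Γ(a) = ∫ t^(a-1) e^(-t) dt` under the integral sign and substitute `t = r x`.
-/

open MeasureTheory Real Filter ProbabilityTheory

/-- The digamma function `ψ(s) = d/ds log Γ(s)`. -/
noncomputable def digamma (s : ℝ) : ℝ :=
  deriv (fun t : ℝ => Real.log (Real.Gamma t)) s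

open Set Topology

lemma abs_log_le_rpow_add_rpow_neg {x ε : ℝ} (hx : 0 < x) (hε : 0 < ε) :
    |log x| ≤ (x ^ ε + x ^ (-ε)) / ε := by
  have hpos := log_le_rpow_div hx.le hε
  have hneg : -log x ≤ x ^ (-ε) / ε := by
    rw [← log_inv, rpow_neg hx.le]
    exact log_le_rpow_div (inv_nonneg.2 hx.le) hε |>.trans_eq (by rw [inv_rpow hx.le])
  have h1 : 0 ≤ x ^ ε / ε := by positivity
  have h2 : 0 ≤ x ^ (-ε) / ε := by positivity
  rw [add_div]
  exact abs_le.2 ⟨by linarith, by linarith⟩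

lemma integrableOn_rpow_mul_log_mul_exp_neg {a : ℝ} (ha : 0 < a) :
    IntegrableOn (fun t => t ^ (a - 1) * (log t * exp (-t))) (Ioi 0) := by
  have hbound : IntegrableOn (fun t => (exp (-t) * t ^ (a + a / 2 - 1)
      + exp (-t) * t ^ (a / 2 - 1)) / (a / 2)) (Ioi 0) :=
    ((GammaIntegral_convergent (by positivity)).add
      (GammaIntegral_convergent (by positivity))).div_const _
  refine hbound.mono' (by fun_prop) ((ae_restrict_iff' measurableSet_Ioi).2 (ae_of_all _ ?_))
  intro t (ht : 0 < t)
  have hlog := abs_log_le_rpow_add_rpow_neg ht (half_pos ha)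
  calc ‖t ^ (a - 1) * (log t * exp (-t))‖ = t ^ (a - 1) * exp (-t) * |log t| := by
        rw [norm_mul, norm_mul, norm_of_nonneg (by positivity),
          norm_of_nonneg (exp_pos _).le, Real.norm_eq_abs]; ring
    _ ≤ t ^ (a - 1) * exp (-t) * ((t ^ (a / 2) + t ^ (-(a / 2))) / (a / 2)) := by
        gcongr
    _ = _ := by
        rw [show a + a / 2 - 1 = (a - 1) + a / 2 by ring,
          show a / 2 - 1 = (a - 1) + -(a / 2) by ring, rpow_add ht, rpow_add ht]
        ring

theorem hasDerivAt_Gamma_of_pos {a : ℝ} (ha : 0 < a) :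
    HasDerivAt Gamma (∫ t in Ioi 0, t ^ (a - 1) * (log t * exp (-t))) a := by
  have hC : HasDerivAt Complex.Gamma
      (∫ t : ℝ in Ioi 0, (t : ℂ) ^ ((a : ℂ) - 1) * (log t * exp (-t))) (a : ℂ) := by
    refine (Complex.hasDerivAt_GammaIntegral (by simpa using ha)).congr_of_eventuallyEq ?_
    filter_upwards [(Complex.continuous_re.isOpen_preimage _ isOpen_Ioi).mem_nhds
      (by simpa using ha)] with z hz using Complex.Gamma_eq_integral hz
  have hreal : ∫ t : ℝ in Ioi 0, (t : ℂ) ^ ((a : ℂ) - 1) * (log t * exp (-t))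
      = ((∫ t in Ioi 0, t ^ (a - 1) * (log t * exp (-t)) : ℝ) : ℂ) := by
    rw [← integral_complex_ofReal]
    refine setIntegral_congr_fun measurableSet_Ioi fun t (ht : 0 < t) => ?_
    rw [Complex.ofReal_mul, Complex.ofReal_cpow ht.le]
    push_cast
    rfl
  rw [hreal] at hC
  exact hC.real_of_complex

theorem digamma_eq_integral_div_Gamma {a : ℝ} (ha : 0 < a) :
    digamma a = (∫ t in Ioi 0, t ^ (a - 1) * (log t * exp (-t))) / Gamma a :=
  ((hasDerivAt_Gamma_of_pos ha).log (Gamma_pos_of_pos ha).ne').deriv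

section GammaMeasure

variable {a r : ℝ}

lemma measurable_gammaPDF (a r : ℝ) : Measurable (gammaPDF a r) :=
  (measurable_gammaPDFReal a r).ennreal_ofReal

lemma ae_pos_gammaMeasure (a r : ℝ) : ∀ᵐ x ∂gammaMeasure a r, 0 < x := by
  rw [gammaMeasure, ae_withDensity_iff (measurable_gammaPDF a r)]
  filter_upwards [measure_singleton (μ := volume) (0 : ℝ) |> compl_mem_ae_iff.2] with x hx0 hpdf
  by_contra! hx
  exact hpdf (gammaPDF_of_neg (lt_of_le_of_ne hx hx0))

lemma integrable_gammaMeasure_iff (ha : 0 < a) (hr : 0 < r) {f : ℝ → ℝ} :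
    Integrable f (gammaMeasure a r) ↔ IntegrableOn (fun x => gammaPDFReal a r x * f x) (Ioi 0) := by
  rw [gammaMeasure, integrable_withDensity_iff_integrable_smul'
    (measurable_gammaPDF a r) (ae_of_all _ fun _ => ENNReal.ofReal_lt_top),
    ← integrableOn_Ici_iff_integrableOn_Ioi, integrableOn_iff_integrable_of_support_subset]
  · simp only [gammaPDF, ENNReal.toReal_ofReal (gammaPDFReal_nonneg ha hr _), smul_eq_mul]
  · intro x hx
    by_contra h
    simp [gammaPDFReal, (notMem_Ici.1 h).not_ge] at hx

lemma integral_gammaMeasure (ha : 0 < a) (hr : 0 < r) (f : ℝ → ℝ) :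
    ∫ x, f x ∂gammaMeasure a r = ∫ x in Ioi 0, gammaPDFReal a r x * f x := by
  rw [gammaMeasure, integral_withDensity_eq_integral_toReal_smul
    (measurable_gammaPDF a r) (ae_of_all _ fun _ => ENNReal.ofReal_lt_top),
    ← integral_Ici_eq_integral_Ioi, setIntegral_eq_integral_of_forall_compl_eq_zero]
  · simp only [gammaPDF, ENNReal.toReal_ofReal (gammaPDFReal_nonneg ha hr _), smul_eq_mul]
  · intro x hx
    simp [gammaPDFReal, (notMem_Ici.1 hx).not_ge]

lemma gammaPDFReal_mul_log (hr : 0 < r) {x : ℝ} (hx : 0 < x) :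
    gammaPDFReal a r x * log x = r / Gamma a *
      ((r * x) ^ (a - 1) * (log (r * x) * exp (-(r * x)))
        - log r * (exp (-(r * x)) * (r * x) ^ (a - 1))) := by
  rw [gammaPDFReal, if_pos hx.le, log_mul hr.ne' hx.ne', mul_rpow hr.le hx.le,
    rpow_sub_one hr.ne']
  field_simp
  ring

lemma integrable_log_gammaMeasure (ha : 0 < a) (hr : 0 < r) :
    Integrable log (gammaMeasure a r) := by
  set g : ℝ → ℝ := fun t => t ^ (a - 1) * (log t * exp (-t)) - log r * (exp (-t) * t ^ (a - 1))
  have hg : IntegrableOn g (Ioi 0) :=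
    (integrableOn_rpow_mul_log_mul_exp_neg ha).sub ((GammaIntegral_convergent ha).const_mul _)
  rw [integrable_gammaMeasure_iff ha hr]
  refine IntegrableOn.congr_fun (((integrableOn_Ioi_comp_mul_left_iff g 0 hr).2
    (by simpa using hg)).const_mul (r / Gamma a))
    (fun x hx => (gammaPDFReal_mul_log hr hx).symm) measurableSet_Ioi

lemma integral_log_gammaMeasure (ha : 0 < a) (hr : 0 < r) :
    ∫ x, log x ∂gammaMeasure a r = digamma a - log r := by
  set g : ℝ → ℝ := fun t => t ^ (a - 1) * (log t * exp (-t)) - log r * (exp (-t) * t ^ (a - 1))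
  have hg : ∫ t in Ioi 0, g t = Gamma a * (digamma a - log r) := by
    rw [integral_sub (integrableOn_rpow_mul_log_mul_exp_neg ha)
      ((GammaIntegral_convergent ha).const_mul _), integral_const_mul, ← Gamma_eq_integral ha,
      digamma_eq_integral_div_Gamma ha]
    field_simp [(Gamma_pos_of_pos ha).ne']
  rw [integral_gammaMeasure ha hr, setIntegral_congr_fun measurableSet_Ioi
    (fun x hx => gammaPDFReal_mul_log hr hx), integral_const_mul,
    integral_comp_mul_left_Ioi g 0 hr, mul_zero, hg, smul_eq_mul]
  field_simp [(Gamma_pos_of_pos ha).ne']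

end GammaMeasure

section LogOfProduct

variable {Ω : Type*} [MeasurableSpace Ω] {P : Measure Ω} {X Y : Ω → ℝ}

lemma ae_pos_map_mul (hX : AEMeasurable X P) (hY : AEMeasurable Y P)
    (hXpos : ∀ᵐ x ∂P.map X, 0 < x) (hYpos : ∀ᵐ y ∂P.map Y, 0 < y) :
    ∀ᵐ z ∂P.map (fun ω => X ω * Y ω), 0 < z := by
  rw [ae_map_iff (hX.fun_mul hY) measurableSet_Ioi]
  filter_upwards [ae_of_ae_map hX hXpos, ae_of_ae_map hY hYpos] with ω hx hy using mul_pos hx hy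

lemma log_mul_ae_eq (hX : AEMeasurable X P) (hY : AEMeasurable Y P)
    (hXpos : ∀ᵐ x ∂P.map X, 0 < x) (hYpos : ∀ᵐ y ∂P.map Y, 0 < y) :
    (fun ω => log (X ω * Y ω)) =ᵐ[P] fun ω => log (X ω) + log (Y ω) := by
  filter_upwards [ae_of_ae_map hX hXpos, ae_of_ae_map hY hYpos] with ω hx hy
    using log_mul hx.ne' hy.ne'

lemma integrable_log_map_mul (hX : AEMeasurable X P) (hY : AEMeasurable Y P)
    (hXpos : ∀ᵐ x ∂P.map X, 0 < x) (hYpos : ∀ᵐ y ∂P.map Y, 0 < y)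
    (hlogX : Integrable log (P.map X)) (hlogY : Integrable log (P.map Y)) :
    Integrable log (P.map fun ω => X ω * Y ω) := by
  rw [integrable_map_measure measurable_log.aestronglyMeasurable (hX.fun_mul hY)]
  rw [integrable_map_measure measurable_log.aestronglyMeasurable hX] at hlogX
  rw [integrable_map_measure measurable_log.aestronglyMeasurable hY] at hlogY
  exact (hlogX.add hlogY).congr (log_mul_ae_eq hX hY hXpos hYpos).symm

lemma integral_log_map_mul (hX : AEMeasurable X P) (hY : AEMeasurable Y P)
    (hXpos : ∀ᵐ x ∂P.map X, 0 < x) (hYpos : ∀ᵐ y ∂P.map Y, 0 < y)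
    (hlogX : Integrable log (P.map X)) (hlogY : Integrable log (P.map Y)) :
    ∫ z, log z ∂P.map (fun ω => X ω * Y ω) = ∫ x, log x ∂P.map X + ∫ y, log y ∂P.map Y := by
  rw [integrable_map_measure measurable_log.aestronglyMeasurable hX] at hlogX
  rw [integrable_map_measure measurable_log.aestronglyMeasurable hY] at hlogY
  rw [integral_map (hX.fun_mul hY) measurable_log.aestronglyMeasurable,
    integral_map hX measurable_log.aestronglyMeasurable,
    integral_map hY measurable_log.aestronglyMeasurable,
    integral_congr_ae (log_mul_ae_eq hX hY hXpos hYpos)]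
  exact integral_add hlogX hlogY

end LogOfProduct

def IsWaterLevel (ν : Measure ℝ) (S m : ℝ) : Prop :=
  0 < m ∧ ∫ l, max (1 / m - 1 / l) 0 ∂ν = S

section WaterFilling

variable {ν : Measure ℝ} {S m : ℝ}

lemma IsWaterLevel.le_one_div [IsProbabilityMeasure ν] (hν : ∀ᵐ l ∂ν, 0 < l)
    (h : IsWaterLevel ν S m) (hS : 0 < S) : m ≤ 1 / S := by
  obtain ⟨hm, hint⟩ := h
  have hi : Integrable (fun l => max (1 / m - 1 / l) 0) ν := by
    by_contra hni
    rw [integral_undef hni] at hint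
    exact hS.ne hint
  have hle : S ≤ 1 / m := by
    calc S = ∫ l, max (1 / m - 1 / l) 0 ∂ν := hint.symm
      _ ≤ ∫ _, 1 / m ∂ν := by
        refine integral_mono_ae hi (integrable_const _) ?_
        filter_upwards [hν] with l hl
        exact max_le (by simp [hl.le]) (by positivity)
      _ = 1 / m := by simp
  exact (_root_.le_one_div hS hm).1 hle

lemma IsWaterLevel.integral_max_one_sub_div (hν : ∀ᵐ l ∂ν, 0 < l) (h : IsWaterLevel ν S m) :
    ∫ l, max (1 - m / l) 0 ∂ν = m * S := by
  obtain ⟨hm, hint⟩ := h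
  rw [← hint, ← integral_const_mul]
  refine integral_congr_ae ?_
  filter_upwards [hν] with l hl
  rw [mul_max_of_nonneg _ _ hm.le, mul_zero, mul_sub, mul_one_div_cancel hm.ne', mul_one_div]

lemma tendsto_integral_max_log {ι : Type*} {L : Filter ι} [L.IsCountablyGenerated]
    (hlog : Integrable log ν) {m : ι → ℝ} (hm : Tendsto m L (𝓝[>] 0)) :
    Tendsto (fun i => ∫ l, max (log l) (log (m i)) ∂ν) L (𝓝 (∫ l, log l ∂ν)) := by
  have hlogm : Tendsto (fun i => log (m i)) L atBot := tendsto_log_nhdsGT_zero.comp hm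
  refine tendsto_integral_filter_of_dominated_convergence (fun l => |log l|)
    (.of_forall fun i => by fun_prop) ?_ hlog.abs ?_
  · filter_upwards [hlogm.eventually (eventually_le_atBot 0)] with i hi
    refine ae_of_all _ fun l => ?_
    rw [Real.norm_eq_abs]
    rcases le_total (log (m i)) (log l) with h | h
    · rw [max_eq_left h]
    · rw [max_eq_right h, abs_of_nonpos hi, abs_of_nonpos (h.trans hi)]
      linarith
  · refine ae_of_all _ fun l => tendsto_const_nhds.congr' ?_
    filter_upwards [hlogm.eventually (eventually_le_atBot (log l))] with i hi
    exact (max_eq_left hi).symm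

lemma integral_max_log_div_zero [IsProbabilityMeasure ν] (hν : ∀ᵐ l ∂ν, 0 < l)
    (hlog : Integrable log ν) (hm : 0 < m) :
    ∫ l, max (log (l / m)) 0 ∂ν = ∫ l, max (log l) (log m) ∂ν - log m := by
  have hi : Integrable (fun l => max (log l) (log m)) ν := hlog.sup (integrable_const _)
  calc ∫ l, max (log (l / m)) 0 ∂ν = ∫ l, (max (log l) (log m) - log m) ∂ν := by
        refine integral_congr_ae ?_
        filter_upwards [hν] with l hl
        rw [log_div hl.ne' hm.ne', ← max_sub_sub_right, sub_self]
    _ = _ := by rw [integral_sub hi (integrable_const _), integral_const, probReal_univ, one_smul]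

variable [IsProbabilityMeasure ν] {μ : ℝ → ℝ}

lemma tendsto_waterLevel_nhdsGT_zero (hν : ∀ᵐ l ∂ν, 0 < l)
    (hμ : ∀ S, 0 < S → IsWaterLevel ν S (μ S)) : Tendsto μ atTop (𝓝[>] 0) := by
  have hpos : ∀ᶠ S in atTop, 0 < μ S :=
    (eventually_gt_atTop 0).mono fun S hS => (hμ S hS).1
  refine tendsto_nhdsWithin_of_tendsto_nhds_of_eventually_within _ ?_ hpos
  refine squeeze_zero' (hpos.mono fun S hS => hS.le) ?_
    (tendsto_const_nhds (x := (1 : ℝ)).div_atTop tendsto_id)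
  filter_upwards [eventually_gt_atTop 0] with S hS using (hμ S hS).le_one_div hν hS

lemma tendsto_waterLevel_mul_self (hν : ∀ᵐ l ∂ν, 0 < l)
    (hμ : ∀ S, 0 < S → IsWaterLevel ν S (μ S)) : Tendsto (fun S => μ S * S) atTop (𝓝 1) := by
  have hμ0 := tendsto_waterLevel_nhdsGT_zero hν hμ
  have hlim : Tendsto (fun S => ∫ l, max (1 - μ S / l) 0 ∂ν) atTop (𝓝 (∫ _, (1 : ℝ) ∂ν)) := by
    refine tendsto_integral_filter_of_dominated_convergence (fun _ => 1)
      (.of_forall fun S => by fun_prop) ?_ (integrable_const _) ?_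
    · filter_upwards [hμ0 self_mem_nhdsWithin] with S (hS : 0 < μ S)
      filter_upwards [hν] with l hl
      rw [norm_of_nonneg (le_max_right _ _)]
      exact max_le (by simp [div_nonneg hS.le hl.le]) zero_le_one
    · refine ae_of_all _ fun l => ?_
      have hc : Continuous fun x : ℝ => max (1 - x / l) 0 := by fun_prop
      simpa [Function.comp_def] using (hc.tendsto 0).comp (tendsto_nhdsWithin_iff.1 hμ0).1
  rw [integral_const, probReal_univ, one_smul] at hlim
  refine hlim.congr' ?_
  filter_upwards [eventually_gt_atTop 0] with S hS
  exact (hμ S hS).integral_max_one_sub_div hν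

theorem tendsto_integral_max_log_div_waterLevel_sub_log (hν : ∀ᵐ l ∂ν, 0 < l)
    (hlog : Integrable log ν) (hμ : ∀ S, 0 < S → IsWaterLevel ν S (μ S)) :
    Tendsto (fun S => ∫ l, max (log (l / μ S)) 0 ∂ν - log S) atTop (𝓝 (∫ l, log l ∂ν)) := by
  have hlim := (tendsto_integral_max_log hlog (tendsto_waterLevel_nhdsGT_zero hν hμ)).sub
    ((continuousAt_log one_ne_zero).tendsto.comp (tendsto_waterLevel_mul_self hν hμ))
  rw [log_one, sub_zero] at hlim
  refine hlim.congr' ?_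
  filter_upwards [eventually_gt_atTop 0] with S hS
  have hm := (hμ S hS).1
  rw [Function.comp_apply, integral_max_log_div_zero hν hlog hm, log_mul hm.ne' hS.ne']
  ring

end WaterFilling

theorem capacity_highSNR_gammaGamma_general
    {Ω : Type*} [MeasurableSpace Ω] (P : Measure Ω) [IsProbabilityMeasure P]
    (a b : ℝ) (ha : 0 < a) (hb : 0 < b)
    (k : ℝ)
    (X Y : Ω → ℝ) (hX : Measurable X) (hY : Measurable Y)
    (hXlaw : Measure.map X P = gammaMeasure a a)
    (hYlaw : Measure.map Y P = gammaMeasure b b)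
    (ν : Measure ℝ) (hνdef : ν = Measure.map (fun ω => X ω * Y ω) P)
    (μfun : ℝ → ℝ)
    (hμ : ∀ S : ℝ, 0 < S → 0 < μfun S ∧ ∫ l, max (1 / μfun S - 1 / l) 0 ∂ν = S) :
    Tendsto
      (fun S => (1 / k) * (∫ l, max (Real.log (l / μfun S)) 0 ∂ν) - (1 / k) * Real.log S)
      atTop
      (nhds ((1 / k) * (digamma a + digamma b - Real.log (a * b)))) := by
  have hXpos : ∀ᵐ x ∂P.map X, 0 < x := hXlaw ▸ ae_pos_gammaMeasure a a
  have hYpos : ∀ᵐ y ∂P.map Y, 0 < y := hYlaw ▸ ae_pos_gammaMeasure b b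
  have hlogX : Integrable log (P.map X) := hXlaw ▸ integrable_log_gammaMeasure ha ha
  have hlogY : Integrable log (P.map Y) := hYlaw ▸ integrable_log_gammaMeasure hb hb
  have hνpos : ∀ᵐ l ∂ν, 0 < l :=
    hνdef ▸ ae_pos_map_mul hX.aemeasurable hY.aemeasurable hXpos hYpos
  have hlogν : Integrable log ν :=
    hνdef ▸ integrable_log_map_mul hX.aemeasurable hY.aemeasurable hXpos hYpos hlogX hlogY
  have hlogν_eq : ∫ l, log l ∂ν = digamma a + digamma b - log (a * b) := by
    rw [hνdef, integral_log_map_mul hX.aemeasurable hY.aemeasurable hXpos hYpos hlogX hlogY,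
      hXlaw, hYlaw, integral_log_gammaMeasure ha ha, integral_log_gammaMeasure hb hb,
      log_mul ha.ne' hb.ne']
    ring
  have : IsProbabilityMeasure ν :=
    hνdef ▸ Measure.isProbabilityMeasure_map (hX.mul hY).aemeasurable
  have hlim := (tendsto_integral_max_log_div_waterLevel_sub_log hνpos hlogν hμ).const_mul (1 / k)
  simpa only [hlogν_eq, mul_sub] using hlim

/-- **High-SNR capacity of the Gamma–Gamma channel without pointing error.** Let `ν` be
the law of `Z = X·Y` with `X ~ Gamma(a,a)` and `Y ~ Gamma(b,b)` independent; let `μ(S)`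
be the water level of `ν` at `S` and `C̄(S) = (1/k)·∫ max (log (λ/μ(S))) 0 dν` the
waterfilling capacity (`k ∈ {1,2}`). Then
`C̄(S) - (1/k) log S → (1/k)·(ψ(a) + ψ(b) - log (a·b))` as `S → ∞`. -/
theorem capacity_highSNR_gammaGamma
    {Ω : Type*} [MeasurableSpace Ω] (P : Measure Ω) [IsProbabilityMeasure P]
    (a b : ℝ) (ha : 0 < a) (hb : 0 < b)
    (k : ℝ) (hk : k = 1 ∨ k = 2)
    (X Y : Ω → ℝ) (hX : Measurable X) (hY : Measurable Y)
    (hind : IndepFun X Y P)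
    (hXlaw : Measure.map X P = gammaMeasure a a)
    (hYlaw : Measure.map Y P = gammaMeasure b b)
    (ν : Measure ℝ) (hνdef : ν = Measure.map (fun ω => X ω * Y ω) P)
    (μfun : ℝ → ℝ)
    (hμ : ∀ S : ℝ, 0 < S → 0 < μfun S ∧ ∫ l, max (1 / μfun S - 1 / l) 0 ∂ν = S) :
    Tendsto
      (fun S => (1 / k) * (∫ l, max (Real.log (l / μfun S)) 0 ∂ν) - (1 / k) * Real.log S)
      atTop
      (nhds ((1 / k) * (digamma a + digamma b - Real.log (a * b)))) :=
  capacity_highSNR_gammaGamma_general P a b ha hb k X Y hX hY hXlaw hYlaw ν hνdef μfun hμ
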